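/- arXiv:math/0603712 — 2 statements merged into one kernel-verified Lean document; each statement's English description precedes it below -/
import Mathlib

section
/- Let 𝒳 ⊂ ℙⁿ × ℙ^{N_d} be the universal hypersurface of degree d, defined by Σ_{|α|=d} a_α Z^α = 0 for [a] ∈ ℙ^{N_d} and [Z] ∈ ℙⁿ. Then the twisted logarithmic tangent bundle T_{ℙⁿ×ℙ^{N_d}}(−log 𝒳)(1,0) := T_{ℙⁿ×ℙ^{N_d}}(−log 𝒳) ⊗ p*O_{ℙⁿ}(1), where p is the projection to ℙⁿ, is generated by its global sections. -/
/-!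
# Statement 6

Let `𝒳 ⊂ ℙⁿ × ℙ^{N_d}` be the universal hypersurface of degree `d`, defined by
`Σ_{|α|=d} a_α Z^α = 0`.  Then the twisted logarithmic tangent bundle
`T_{ℙⁿ×ℙ^{N_d}}(-log 𝒳)(1,0) = T_{ℙⁿ×ℙ^{N_d}}(-log 𝒳) ⊗ p⁎O_{ℙⁿ}(1)` is generated by its
global sections.

Conventions: everything is expressed on the affine bicone `ℂ^{n+1} × ℂ^{N_d+1}`.
A global section of `T_{ℙⁿ×ℙ^{N_d}}(-log 𝒳) ⊗ p⁎O_{ℙⁿ}(1)` is a polynomial vector field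
`V = Σᵢ V_{Zᵢ} ∂/∂Zᵢ + Σ_α V_{a_α} ∂/∂a_α` on the bicone whose `Z`-components are
bihomogeneous of bidegree `(2, 0)` and whose `a`-components are bihomogeneous of bidegree
`(1, 1)` (the extra `Z`-degree accounting for the twist by `p⁎O(1)`), and which is
logarithmic along `𝒳`, i.e. `V(P) = λ·P` for a (bidegree `(1,0)`) polynomial `λ` — the
residue datum.  Global generation at a point `([Z], [a])` means: every logarithmic tangent
vector can be realized as the value of a global section.  Concretely: for every `(Z, a)`
with `Z ≠ 0 ≠ a` and every vector `(w_Z, w_a)` which is tangent to the cone of `𝒳` whenever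
`P(Z, a) = 0`, and every prescribed residue value `μ` (relevant only when `P(Z,a) = 0`),
some global logarithmic field `V` takes at `(Z, a)` the value `(w_Z, w_a)` modulo the Euler
directions `(ℂ·Z, ℂ·a)` and has residue `λ(Z, a) = μ`; this expresses exactly that the
values of the global sections span the full fiber of the locally free sheaf
`T(-log 𝒳)(1,0)` at every point.
-/

noncomputable section

open MvPolynomial


noncomputable section

open MvPolynomial

/-- The set of monomials of degree `d` in `n+1` variables: multi-indices
`α = (α₀,…,α_n)` with `|α| = Σ αᵢ = d`.  This indexes the coefficients `a_α` of a degree-`d`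
form, i.e. the coordinates on `H⁰(ℙⁿ, O(d))`. -/
def degIdx (n d : ℕ) : Type := {α : Fin (n + 1) → ℕ // ∑ i, α i = d}

instance degIdx.finite (n d : ℕ) : Finite (degIdx n d) := by
  have h : {α : Fin (n + 1) → ℕ | ∑ i, α i = d}.Finite := by
    apply (Set.finite_Icc (fun _ : Fin (n + 1) => 0) fun _ => d).subset
    intro α hα
    simp only [Set.mem_Icc] at *
    constructor
    · intro i; exact Nat.zero_le _
    · intro i
      calc α i ≤ ∑ j, α j := Finset.single_le_sum (fun j _ => Nat.zero_le (α j)) (Finset.mem_univ i)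
        _ = d := hα
  exact h.to_subtype

instance degIdx.fintype (n d : ℕ) : Fintype (degIdx n d) := Fintype.ofFinite _

/-- The homogeneous degree-`d` polynomial with coefficients `a = (a_α)`:
`Σ_{|α| = d} a_α Z^α`. -/
def formOfCoeffs {n d : ℕ} (a : degIdx n d → ℂ) : MvPolynomial (Fin (n + 1)) ℂ :=
  ∑ α : degIdx n d, C (a α) * ∏ i, X i ^ (α.1 i)

/-- The variables `(Z₀,…,Z_n; (a_α)_{|α|=d})` of the bihomogeneous coordinate ring of
`ℙⁿ × ℙ^{N_d}`. -/
abbrev UnivVars (n d : ℕ) := Fin (n + 1) ⊕ degIdx n d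

/-- The defining polynomial `P = Σ_{|α|=d} a_α Z^α` of the universal degree-`d`
hypersurface `𝒳 ⊂ ℙⁿ × ℙ^{N_d}`. -/
def univPoly (n d : ℕ) : MvPolynomial (UnivVars n d) ℂ :=
  ∑ α : degIdx n d, X (Sum.inr α) * ∏ i : Fin (n + 1), X (Sum.inl i) ^ (α.1 i)

/-- weight `1` on the `Z`-variables, `0` on the `a`-variables -/
def weightZ (n d : ℕ) : UnivVars n d → ℕ := Sum.elim (fun _ => 1) fun _ => 0

/-- weight `0` on the `Z`-variables, `1` on the `a`-variables -/
def weightA (n d : ℕ) : UnivVars n d → ℕ := Sum.elim (fun _ => 0) fun _ => 1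

/-- Bihomogeneity of bidegree `(p, q)` on `ℙⁿ × ℙ^{N_d}`. -/
def IsBihomogeneous {n d : ℕ} (F : MvPolynomial (UnivVars n d) ℂ) (p q : ℕ) : Prop :=
  F.IsWeightedHomogeneous (weightZ n d) p ∧ F.IsWeightedHomogeneous (weightA n d) q

/-- A global section of the twisted logarithmic tangent bundle
`T_{ℙⁿ×ℙ^{N_d}}(-log 𝒳) ⊗ p⁎O_{ℙⁿ}(1)`, written on the affine bicone: a polynomial vector
field `V = Σᵢ VZ i·∂/∂Zᵢ + Σ_α VA α·∂/∂a_α` with `Z`-components of bidegree `(2,0)` and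
`a`-components of bidegree `(1,1)`, logarithmic along `𝒳`: `V(P) = lam·P` with `lam` of
bidegree `(1, 0)` (the residue of `V` along `𝒳`). -/
structure TwistedLogTangentSection (n d : ℕ) where
  /-- the `∂/∂Zᵢ`-components -/
  VZ : Fin (n + 1) → MvPolynomial (UnivVars n d) ℂ
  /-- the `∂/∂a_α`-components -/
  VA : degIdx n d → MvPolynomial (UnivVars n d) ℂ
  /-- the residue `λ` with `V(P) = λ·P` -/
  lam : MvPolynomial (UnivVars n d) ℂ
  hVZ : ∀ i, IsBihomogeneous (VZ i) 2 0
  hVA : ∀ α, IsBihomogeneous (VA α) 1 1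
  hlam : IsBihomogeneous lam 1 0
  /-- `V` is logarithmic along `𝒳`: `V(P) = λ·P` -/
  hlog : (∑ i : Fin (n + 1), VZ i * pderiv (Sum.inl i) (univPoly n d)) +
      (∑ α : degIdx n d, VA α * pderiv (Sum.inr α) (univPoly n d)) =
    lam * univPoly n d

/-!
Fix a point `(z, b)` with `z_{j₀} ≠ 0 ≠ b_γ` and put `L = Z_{j₀}/z_{j₀}`, `M = a_γ/b_γ`, both equal
to `1` there. The field with `Z`-components `v_{Z_i} L²`, `a`-components `v_{a_α} L M + G_α` and
residue `μ L` is logarithmic iff `Σ_α G_α Z^α = μ L P - L² Σ_i v_{Z_i} ∂P/∂Z_i - L M Σ_α v_{a_α} Z^α`.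
The right-hand side has bidegree `(d + 1, 1)` and vanishes at `(z, b)` exactly when
`μ P(z, b) = dP(v)`, and every form of bidegree `(d + 1, q)` vanishing at `(z, b)` is
`Σ_α G_α Z^α` with `G_α` of bidegree `(1, q)` vanishing at `(z, b)`: substituting
`Z_i ↦ (z_i/z_{j₀}) Z_{j₀}` shows that modulo the linear forms `Z_i - (z_i/z_{j₀}) Z_{j₀}` such a
form is `Z_{j₀}^{d+1} h` with `h(z, b) = 0`. On `𝒳` the condition `μ P(z, b) = dP(v)` is the
tangency hypothesis; off `𝒳` it is met by moving `v_a` along the Euler direction `b`, which changes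
`dP(v)` by a multiple of `P(z, b) ≠ 0`.
-/

namespace MvPolynomial

variable {σ R : Type*} [CommSemiring R]

theorem IsWeightedHomogeneous.aeval_pow_mul {S : Type*} [CommSemiring S] [Algebra R S]
    {w : σ → ℕ} {f : MvPolynomial σ R} {m : ℕ} (hf : f.IsWeightedHomogeneous w m)
    (y : S) (φ : σ → S) :
    aeval (fun v => y ^ w v * φ v) f = y ^ m * aeval φ f := by
  rw [f.as_sum, map_sum, map_sum, Finset.mul_sum]
  refine Finset.sum_congr rfl fun s hs => ?_
  have hs : s.prod (fun v e => y ^ (w v * e)) = y ^ m := by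
    rw [← hf (mem_support_iff.1 hs), Finsupp.weight_apply, Finsupp.prod, Finsupp.sum,
      Finset.prod_pow_eq_pow_sum]
    simp only [smul_eq_mul, mul_comm]
  simp only [aeval_monomial, mul_pow, Finsupp.prod_mul, ← pow_mul, hs]
  ring

theorem weightedHomogeneousComponent_mul_of_left {w : σ → ℕ} {u : MvPolynomial σ R} {k : ℕ}
    (hu : u.IsWeightedHomogeneous w k) (m : ℕ) (f : MvPolynomial σ R) :
    weightedHomogeneousComponent w (k + m) (u * f) = u * weightedHomogeneousComponent w m f := by
  classical
  let := weightedGradedAlgebra R w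
  simp_rw [← weightedDecomposition.decompose'_apply]
  exact DirectSum.coe_decompose_mul_add_of_left_mem _ hu

theorem IsWeightedHomogeneous.weightedHomogeneousComponent {w w' : σ → ℕ}
    {f : MvPolynomial σ R} {k : ℕ} (hf : f.IsWeightedHomogeneous w' k) (m : ℕ) :
    (weightedHomogeneousComponent w m f).IsWeightedHomogeneous w' k := by
  classical
  intro s hs
  rw [coeff_weightedHomogeneousComponent] at hs
  split_ifs at hs
  · exact hf hs
  · exact absurd rfl hs

theorem sub_aeval_mem_span_X_sub {R : Type*} [CommRing R] (Ψ : σ → MvPolynomial σ R)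
    (f : MvPolynomial σ R) : f - aeval Ψ f ∈ Ideal.span (Set.range fun v => X v - Ψ v) := by
  induction f using MvPolynomial.induction_on with
  | C c => simp
  | add p q hp hq => simpa [add_sub_add_comm] using add_mem hp hq
  | mul_X p v hp =>
    rw [map_mul, aeval_X,
      show p * X v - aeval Ψ p * Ψ v = p * (X v - Ψ v) + (p - aeval Ψ p) * Ψ v by ring]
    exact add_mem (Ideal.mul_mem_left _ _ (Ideal.subset_span ⟨v, rfl⟩))
      (Ideal.mul_mem_right _ _ hp)

end MvPolynomial

theorem exists_mul_eq_add_mul {K : Type*} [Field K] {p D : K} (μ : K) (h : p = 0 → D = 0) :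
    ∃ c, μ * p = D + c * p := by
  by_cases hp : p = 0
  · exact ⟨0, by simp [hp, h hp]⟩
  · exact ⟨(μ * p - D) / p, by field_simp; ring⟩

section UniversalHypersurface

variable {n d : ℕ}

theorem weight_weightZ_apply (s : UnivVars n d →₀ ℕ) :
    Finsupp.weight (weightZ n d) s = ∑ i, s (Sum.inl i) := by
  simp [Finsupp.weight_apply, Finsupp.sum_fintype, Fintype.sum_sum_type, weightZ]

theorem weight_weightA_apply (s : UnivVars n d →₀ ℕ) :
    Finsupp.weight (weightA n d) s = ∑ β : degIdx n d, s (Sum.inr β) := by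
  simp [Finsupp.weight_apply, Finsupp.sum_fintype, Fintype.sum_sum_type, weightA]

namespace IsBihomogeneous

variable {f g : MvPolynomial (UnivVars n d) ℂ} {p q p' q' : ℕ}

theorem add (hf : IsBihomogeneous f p q) (hg : IsBihomogeneous g p q) :
    IsBihomogeneous (f + g) p q :=
  ⟨hf.1.add hg.1, hf.2.add hg.2⟩

theorem sub (hf : IsBihomogeneous f p q) (hg : IsBihomogeneous g p q) :
    IsBihomogeneous (f - g) p q :=
  ⟨hf.1.sub hg.1, hf.2.sub hg.2⟩

theorem mul (hf : IsBihomogeneous f p q) (hg : IsBihomogeneous g p' q') :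
    IsBihomogeneous (f * g) (p + p') (q + q') :=
  ⟨hf.1.mul hg.1, hf.2.mul hg.2⟩

theorem C_mul (hf : IsBihomogeneous f p q) (c : ℂ) : IsBihomogeneous (C c * f) p q :=
  ⟨hf.1.C_mul c, hf.2.C_mul c⟩

theorem pow (hf : IsBihomogeneous f p q) (k : ℕ) : IsBihomogeneous (f ^ k) (k * p) (k * q) :=
  ⟨hf.1.pow k, hf.2.pow k⟩

theorem sum {ι : Type*} (s : Finset ι) {f : ι → MvPolynomial (UnivVars n d) ℂ}
    (h : ∀ i ∈ s, IsBihomogeneous (f i) p q) : IsBihomogeneous (∑ i ∈ s, f i) p q :=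
  ⟨IsWeightedHomogeneous.sum s f p fun i hi => (h i hi).1,
    IsWeightedHomogeneous.sum s f q fun i hi => (h i hi).2⟩

theorem prod {ι : Type*} (s : Finset ι) {f : ι → MvPolynomial (UnivVars n d) ℂ}
    {p q : ι → ℕ} (h : ∀ i ∈ s, IsBihomogeneous (f i) (p i) (q i)) :
    IsBihomogeneous (∏ i ∈ s, f i) (∑ i ∈ s, p i) (∑ i ∈ s, q i) :=
  ⟨IsWeightedHomogeneous.prod s f p fun i hi => (h i hi).1,
    IsWeightedHomogeneous.prod s f q fun i hi => (h i hi).2⟩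

end IsBihomogeneous

theorem isBihomogeneous_zero (p q : ℕ) : IsBihomogeneous (0 : MvPolynomial (UnivVars n d) ℂ) p q :=
  ⟨isWeightedHomogeneous_zero _ _ _, isWeightedHomogeneous_zero _ _ _⟩

theorem isBihomogeneous_X_inl (i : Fin (n + 1)) :
    IsBihomogeneous (X (Sum.inl i) : MvPolynomial (UnivVars n d) ℂ) 1 0 :=
  ⟨isWeightedHomogeneous_X _ _ _, isWeightedHomogeneous_X _ _ _⟩

theorem isBihomogeneous_X_inr (β : degIdx n d) :
    IsBihomogeneous (X (Sum.inr β) : MvPolynomial (UnivVars n d) ℂ) 0 1 :=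
  ⟨isWeightedHomogeneous_X _ _ _, isWeightedHomogeneous_X _ _ _⟩

def bihomComponent (p q : ℕ) :
    MvPolynomial (UnivVars n d) ℂ →ₗ[ℂ] MvPolynomial (UnivVars n d) ℂ :=
  weightedHomogeneousComponent (weightA n d) q ∘ₗ weightedHomogeneousComponent (weightZ n d) p

theorem isBihomogeneous_bihomComponent (p q : ℕ) (f : MvPolynomial (UnivVars n d) ℂ) :
    IsBihomogeneous (bihomComponent p q f) p q :=
  ⟨(weightedHomogeneousComponent_isWeightedHomogeneous p f).weightedHomogeneousComponent q,
    weightedHomogeneousComponent_isWeightedHomogeneous q _⟩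

theorem IsBihomogeneous.bihomComponent_eq {f : MvPolynomial (UnivVars n d) ℂ} {p q : ℕ}
    (hf : IsBihomogeneous f p q) : bihomComponent p q f = f := by
  simp [bihomComponent, hf.1.weightedHomogeneousComponent_same,
    hf.2.weightedHomogeneousComponent_same]

theorem IsBihomogeneous.bihomComponent_mul {u : MvPolynomial (UnivVars n d) ℂ} {k l p q p' q' : ℕ}
    (hu : IsBihomogeneous u k l) (hp : k + p = p') (hq : l + q = q')
    (f : MvPolynomial (UnivVars n d) ℂ) :
    bihomComponent p' q' (u * f) = u * bihomComponent p q f := by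
  subst hp hq
  simp [bihomComponent, weightedHomogeneousComponent_mul_of_left hu.1,
    weightedHomogeneousComponent_mul_of_left hu.2]

def zMonomial (α : degIdx n d) : MvPolynomial (UnivVars n d) ℂ :=
  ∏ i, X (Sum.inl i) ^ α.1 i

theorem univPoly_eq_sum : univPoly n d = ∑ α, X (Sum.inr α) * zMonomial α := rfl

theorem isBihomogeneous_zMonomial (α : degIdx n d) : IsBihomogeneous (zMonomial α) d 0 := by
  simpa [zMonomial, α.2] using
    IsBihomogeneous.prod Finset.univ fun i _ => (isBihomogeneous_X_inl (d := d) i).pow (α.1 i)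

theorem isBihomogeneous_univPoly : IsBihomogeneous (univPoly n d) d 1 := by
  rw [univPoly_eq_sum]
  simpa using IsBihomogeneous.sum Finset.univ fun α _ =>
    (isBihomogeneous_X_inr α).mul (isBihomogeneous_zMonomial α)

theorem pderiv_inr_zMonomial (α β : degIdx n d) : pderiv (Sum.inr β) (zMonomial α) = 0 :=
  Finset.prod_induction _ (fun g => pderiv (Sum.inr β) g = 0)
    (fun f g hf hg => by simp [hf, hg]) pderiv_one
    fun i _ => by simp [pderiv_X_of_ne (Sum.inl_ne_inr)]

theorem pderiv_inr_univPoly (β : degIdx n d) :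
    pderiv (Sum.inr β) (univPoly n d) = zMonomial β := by
  classical
  simp [univPoly_eq_sum, pderiv_inr_zMonomial, pderiv_X, Pi.single_apply]

theorem isBihomogeneous_pderiv_inl_univPoly (hd : 1 ≤ d) (i : Fin (n + 1)) :
    IsBihomogeneous (pderiv (Sum.inl i) (univPoly n d)) (d - 1) 1 :=
  ⟨isBihomogeneous_univPoly.1.pderiv (by simp [weightZ]; omega),
    isBihomogeneous_univPoly.2.pderiv (by simp [weightA])⟩

theorem sum_mul_eval_pderiv_inr_univPoly (Z : Fin (n + 1) → ℂ) (a : degIdx n d → ℂ) :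
    ∑ α, a α * eval (Sum.elim Z a) (pderiv (Sum.inr α) (univPoly n d)) =
      eval (Sum.elim Z a) (univPoly n d) := by
  simp only [pderiv_inr_univPoly]
  simp [univPoly_eq_sum]

theorem exists_eq_sum_mul_zMonomial {f : MvPolynomial (UnivVars n d) ℂ} {q : ℕ}
    (hf : IsBihomogeneous f d q) :
    ∃ c : degIdx n d → MvPolynomial (UnivVars n d) ℂ,
      (∀ α, IsBihomogeneous (c α) 0 q) ∧ f = ∑ α, c α * zMonomial α := by
  classical
  let IsExpansion (g : MvPolynomial (UnivVars n d) ℂ) : Prop :=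
    ∃ c : degIdx n d → MvPolynomial (UnivVars n d) ℂ,
      (∀ α, IsBihomogeneous (c α) 0 q) ∧ g = ∑ α, c α * zMonomial α
  have hadd : ∀ g g', IsExpansion g → IsExpansion g' → IsExpansion (g + g') := by
    rintro _ _ ⟨c, hc, rfl⟩ ⟨c', hc', rfl⟩
    exact ⟨c + c', fun α => (hc α).add (hc' α), by simp [add_mul, Finset.sum_add_distrib]⟩
  have hzero : IsExpansion 0 := ⟨0, fun _ => isBihomogeneous_zero 0 q, by simp⟩
  have hmonomial : ∀ s ∈ f.support, IsExpansion (monomial s (coeff s f)) := by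
    intro s hs
    have hZ : ∑ i, s (Sum.inl i) = d := by
      rw [← weight_weightZ_apply]; exact hf.1 (mem_support_iff.1 hs)
    have hA : ∑ β : degIdx n d, s (Sum.inr β) = q := by
      rw [← weight_weightA_apply]; exact hf.2 (mem_support_iff.1 hs)
    let α : degIdx n d := ⟨fun i => s (Sum.inl i), hZ⟩
    let r : MvPolynomial (UnivVars n d) ℂ := C (coeff s f) * ∏ β, X (Sum.inr β) ^ s (Sum.inr β)
    have hr : IsBihomogeneous r 0 q := by
      simpa [hA] using (IsBihomogeneous.prod Finset.univ fun β _ =>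
        (isBihomogeneous_X_inr β).pow (s (Sum.inr β))).C_mul (coeff s f)
    refine ⟨fun β => if β = α then r else 0,
      fun β => by dsimp only; split_ifs; exacts [hr, isBihomogeneous_zero 0 q], ?_⟩
    simp only [ite_mul, zero_mul, Finset.sum_ite_eq', Finset.mem_univ, if_true]
    rw [monomial_eq, Finsupp.prod_pow, Fintype.prod_sum_type]
    simp only [r, zMonomial, α]
    ring
  rw [f.as_sum]
  exact Finset.sum_induction _ IsExpansion hadd hzero hmonomial

def vanishingLinearForm (Z : Fin (n + 1) → ℂ) (j₀ i : Fin (n + 1)) :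
    MvPolynomial (UnivVars n d) ℂ :=
  X (Sum.inl i) - C (Z i / Z j₀) * X (Sum.inl j₀)

theorem isBihomogeneous_vanishingLinearForm (Z : Fin (n + 1) → ℂ) (j₀ i : Fin (n + 1)) :
    IsBihomogeneous (vanishingLinearForm (d := d) Z j₀ i) 1 0 :=
  (isBihomogeneous_X_inl i).sub ((isBihomogeneous_X_inl j₀).C_mul _)

theorem eval_vanishingLinearForm {Z : Fin (n + 1) → ℂ} {j₀ : Fin (n + 1)} (hj₀ : Z j₀ ≠ 0)
    (a : degIdx n d → ℂ) (i : Fin (n + 1)) :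
    eval (Sum.elim Z a) (vanishingLinearForm Z j₀ i) = 0 := by
  simp [vanishingLinearForm, hj₀]

theorem exists_eq_sum_vanishingLinearForm_mul_add (Z : Fin (n + 1) → ℂ) (j₀ : Fin (n + 1))
    {g : MvPolynomial (UnivVars n d) ℂ} {p q : ℕ} (hg : IsBihomogeneous g (p + 1) q) :
    ∃ (k : Fin (n + 1) → MvPolynomial (UnivVars n d) ℂ) (h : MvPolynomial (UnivVars n d) ℂ),
      (∀ i, IsBihomogeneous (k i) p q) ∧ IsBihomogeneous h 0 q ∧
      g = ∑ i, vanishingLinearForm Z j₀ i * k i + X (Sum.inl j₀) ^ (p + 1) * h := by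
  let φ : UnivVars n d → MvPolynomial (UnivVars n d) ℂ :=
    Sum.elim (fun i => C (Z i / Z j₀)) fun β => X (Sum.inr β)
  obtain ⟨r, hr⟩ := Ideal.mem_span_range_iff_exists_fun.1
    (sub_aeval_mem_span_X_sub (fun v => X (Sum.inl j₀) ^ weightZ n d v * φ v) g)
  rw [hg.1.aeval_pow_mul, Fintype.sum_sum_type] at hr
  have hsplit : g = ∑ i, vanishingLinearForm Z j₀ i * r (Sum.inl i) +
      X (Sum.inl j₀) ^ (p + 1) * aeval φ g := by
    simp only [φ, weightZ, Sum.elim_inl, Sum.elim_inr, pow_one, pow_zero,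
      one_mul, sub_self, mul_zero, Finset.sum_const_zero, add_zero] at hr
    rw [← sub_eq_iff_eq_add, ← hr]
    exact Finset.sum_congr rfl fun i _ => by simp only [vanishingLinearForm]; ring
  have hcomp := congrArg (bihomComponent (p + 1) q) hsplit
  rw [hg.bihomComponent_eq, map_add, map_sum,
    ((isBihomogeneous_X_inl j₀).pow (p + 1)).bihomComponent_mul (p := 0) (q := q) (by simp)
      (by simp)] at hcomp
  simp only [(isBihomogeneous_vanishingLinearForm Z j₀ _).bihomComponent_mul (add_comm 1 p)
    (zero_add q)] at hcomp
  exact ⟨_, _, fun i => isBihomogeneous_bihomComponent p q _,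
    isBihomogeneous_bihomComponent 0 q _, hcomp⟩

theorem exists_eq_sum_mul_zMonomial_of_eval_eq_zero {Z : Fin (n + 1) → ℂ} (hZ : Z ≠ 0)
    (a : degIdx n d → ℂ) {g : MvPolynomial (UnivVars n d) ℂ} {q : ℕ}
    (hg : IsBihomogeneous g (d + 1) q) (hev : eval (Sum.elim Z a) g = 0) :
    ∃ t : degIdx n d → MvPolynomial (UnivVars n d) ℂ,
      (∀ α, IsBihomogeneous (t α) 1 q) ∧ (∀ α, eval (Sum.elim Z a) (t α) = 0) ∧
      g = ∑ α, t α * zMonomial α := by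
  obtain ⟨j₀, hj₀⟩ : ∃ j, Z j ≠ 0 := Function.ne_iff.1 hZ
  obtain ⟨k, h, hk, hh, rfl⟩ := exists_eq_sum_vanishingLinearForm_mul_add Z j₀ hg
  have hh0 : eval (Sum.elim Z a) h = 0 := by
    simp [eval_vanishingLinearForm hj₀] at hev
    exact hev.resolve_left hj₀
  choose e he hke using fun i => exists_eq_sum_mul_zMonomial (hk i)
  obtain ⟨f, hf, hXf⟩ := exists_eq_sum_mul_zMonomial (q := 0)
    (by simpa using (isBihomogeneous_X_inl (d := d) j₀).pow d)
  refine ⟨fun α => ∑ i, vanishingLinearForm Z j₀ i * e i α + X (Sum.inl j₀) * h * f α,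
    fun α => ?_, fun α => by simp [eval_vanishingLinearForm hj₀, hh0], ?_⟩
  · refine (IsBihomogeneous.sum _ fun i _ => ?_).add ?_
    · simpa using (isBihomogeneous_vanishingLinearForm Z j₀ i).mul (he i α)
    · simpa using ((isBihomogeneous_X_inl j₀).mul hh).mul (hf α)
  · rw [pow_succ', hXf]
    simp only [hke, add_mul, Finset.sum_add_distrib]
    congr 1
    · simp only [Finset.mul_sum, Finset.sum_mul]
      rw [Finset.sum_comm]
      exact Finset.sum_congr rfl fun i _ => Finset.sum_congr rfl fun α _ => by ring
    · rw [Finset.mul_sum, Finset.sum_mul]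
      exact Finset.sum_congr rfl fun α _ => by ring

theorem TwistedLogTangentSection.exists_eval_eq (hd : 1 ≤ d) {Z : Fin (n + 1) → ℂ}
    {a : degIdx n d → ℂ} (hZ : Z ≠ 0) (ha : a ≠ 0) (vZ : Fin (n + 1) → ℂ)
    (vA : degIdx n d → ℂ) (μ : ℂ)
    (hv : μ * eval (Sum.elim Z a) (univPoly n d) =
      (∑ i, vZ i * eval (Sum.elim Z a) (pderiv (Sum.inl i) (univPoly n d))) +
        ∑ α, vA α * eval (Sum.elim Z a) (pderiv (Sum.inr α) (univPoly n d))) :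
    ∃ V : TwistedLogTangentSection n d,
      (∀ i, eval (Sum.elim Z a) (V.VZ i) = vZ i) ∧
      (∀ α, eval (Sum.elim Z a) (V.VA α) = vA α) ∧ eval (Sum.elim Z a) V.lam = μ := by
  obtain ⟨j₀, hj₀⟩ : ∃ j, Z j ≠ 0 := Function.ne_iff.1 hZ
  obtain ⟨γ, hγ⟩ : ∃ β, a β ≠ 0 := Function.ne_iff.1 ha
  set P := univPoly n d
  let L : MvPolynomial (UnivVars n d) ℂ := C (Z j₀)⁻¹ * X (Sum.inl j₀)
  let M : MvPolynomial (UnivVars n d) ℂ := C (a γ)⁻¹ * X (Sum.inr γ)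
  have hL : IsBihomogeneous L 1 0 := (isBihomogeneous_X_inl j₀).C_mul _
  have hM : IsBihomogeneous M 0 1 := (isBihomogeneous_X_inr γ).C_mul _
  have hLev : eval (Sum.elim Z a) L = 1 := by simp [L, hj₀]
  have hMev : eval (Sum.elim Z a) M = 1 := by simp [M, hγ]
  let F := C μ * L * P - L * L * ∑ i, C (vZ i) * pderiv (Sum.inl i) P -
    L * M * ∑ α, C (vA α) * pderiv (Sum.inr α) P
  have hF : IsBihomogeneous F (d + 1) 1 := by
    refine IsBihomogeneous.sub (IsBihomogeneous.sub ?_ ?_) ?_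
    · convert (hL.C_mul μ).mul isBihomogeneous_univPoly using 1
      omega
    · convert (hL.mul hL).mul (IsBihomogeneous.sum Finset.univ fun i _ =>
        (isBihomogeneous_pderiv_inl_univPoly hd i).C_mul (vZ i)) using 1
      omega
    · convert (hL.mul hM).mul (IsBihomogeneous.sum Finset.univ fun α _ =>
        (pderiv_inr_univPoly α ▸ isBihomogeneous_zMonomial α).C_mul (vA α)) using 1
      omega
  have hFev : eval (Sum.elim Z a) F = 0 := by
    simp only [F, map_sub, map_mul, map_sum, eval_C, hLev, hMev]
    linear_combination hv
  obtain ⟨G, hG, hGev, hFG⟩ := exists_eq_sum_mul_zMonomial_of_eval_eq_zero hZ a hF hFev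
  refine ⟨⟨fun i => C (vZ i) * (L * L), fun α => C (vA α) * (L * M) + G α, C μ * L,
    fun i => (hL.mul hL).C_mul _, fun α => ((hL.mul hM).C_mul _).add (hG α), hL.C_mul _, ?_⟩,
    fun i => by simp [hLev], fun α => by simp [hLev, hMev, hGev], by simp [hLev]⟩
  have hGP : ∑ α, G α * pderiv (Sum.inr α) P = F := by
    simp only [P, pderiv_inr_univPoly]
    exact hFG.symm
  have hZpart : ∑ i, C (vZ i) * (L * L) * pderiv (Sum.inl i) P =
      L * L * ∑ i, C (vZ i) * pderiv (Sum.inl i) P := by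
    rw [Finset.mul_sum]
    exact Finset.sum_congr rfl fun i _ => by ring
  have hApart : ∑ α, C (vA α) * (L * M) * pderiv (Sum.inr α) P =
      L * M * ∑ α, C (vA α) * pderiv (Sum.inr α) P := by
    rw [Finset.mul_sum]
    exact Finset.sum_congr rfl fun α _ => by ring
  change (∑ i, C (vZ i) * (L * L) * pderiv (Sum.inl i) P) +
      ∑ α, (C (vA α) * (L * M) + G α) * pderiv (Sum.inr α) P = C μ * L * P
  simp only [add_mul, Finset.sum_add_distrib, hZpart, hApart, hGP, F]
  ring

end UniversalHypersurface

/-- The twisted logarithmic tangent bundle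
`T_{ℙⁿ×ℙ^{N_d}}(-log 𝒳)(1,0)` of the log-manifold `(ℙⁿ × ℙ^{N_d}, 𝒳)` is globally
generated: at every point `([Z],[a]) ∈ ℙⁿ × ℙ^{N_d}`, every logarithmic tangent vector
`((w_Z, w_a) mod Euler directions, residue μ)` is the value of a global section of
`T_{ℙⁿ×ℙ^{N_d}}(-log 𝒳) ⊗ p⁎O_{ℙⁿ}(1)`. -/
theorem twisted_log_tangent_globally_generated (n d : ℕ) (hd : 1 ≤ d)
    (Z : Fin (n + 1) → ℂ) (a : degIdx n d → ℂ) (hZ : Z ≠ 0) (ha : a ≠ 0)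
    (wZ : Fin (n + 1) → ℂ) (wA : degIdx n d → ℂ) (μ : ℂ)
    -- if `([Z],[a]) ∈ 𝒳`, the prescribed vector must be tangent to (the cone of) `𝒳`:
    (htangent : eval (Sum.elim Z a) (univPoly n d) = 0 →
      (∑ i : Fin (n + 1), wZ i * eval (Sum.elim Z a) (pderiv (Sum.inl i) (univPoly n d))) +
        (∑ α : degIdx n d, wA α * eval (Sum.elim Z a) (pderiv (Sum.inr α) (univPoly n d))) = 0) :
    ∃ (V : TwistedLogTangentSection n d) (c₁ c₂ : ℂ),
      (∀ i, eval (Sum.elim Z a) (V.VZ i) = wZ i + c₁ * Z i) ∧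
      (∀ α, eval (Sum.elim Z a) (V.VA α) = wA α + c₂ * a α) ∧
      (eval (Sum.elim Z a) (univPoly n d) = 0 → eval (Sum.elim Z a) V.lam = μ) := by
  obtain ⟨c, hc⟩ := exists_mul_eq_add_mul μ htangent
  obtain ⟨V, hVZ, hVA, hlam⟩ :=
    TwistedLogTangentSection.exists_eval_eq hd hZ ha wZ (wA + c • a) μ (by
      simp only [Pi.add_apply, Pi.smul_apply, smul_eq_mul, add_mul, Finset.sum_add_distrib,
        mul_assoc, ← Finset.mul_sum, sum_mul_eval_pderiv_inr_univPoly]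
      linear_combination hc)
  exact ⟨V, 0, c, fun i => by simp [hVZ], fun α => by simp [hVA], fun _ => hlam⟩
end
end
end

section
/- Let 𝒵₀ = {z_{n+1}^d + Σ_{|α|≤d, α_{n+1}=0} a_α z^α = 0} in affine coordinates (z₁,…,z_{n+1}) and parameters (a_α). Given any vector field V₀ = Σ_{j=1}^{n} v_j ∂/∂z_j + v_{n+1} z_{n+1} ∂/∂z_{n+1}, where each v_j = Σ_{k=1}^{n} v_k^{(j)} z_k + v_0^{(j)} is an affine-linear function of z₁,…,z_n and v_{n+1} ∈ ℂ, there exist complex numbers v_α such that the vector field V = Σ_{|α|≤d, α_{n+1}=0} v_α ∂/∂a_α + V₀ is tangent to 𝒵₀; explicitly, the v_α can be chosen so that Σ_α v_α z^α + Σ_{α,j} a_α v_j ∂z^α/∂z_j = 0 identically in z. -/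
/-!
Take `v := -Σⱼ vⱼ · ∂g/∂zⱼ`; the identity then holds trivially and only the degree bound needs
proof. Differentiation lowers the total degree by one (or kills a constant), and multiplying by
an affine-linear `vⱼ` raises it by at most one, so each term has total degree at most `deg g`.
-/

open MvPolynomial

namespace MvPolynomial

variable {R σ : Type*} [CommSemiring R]

theorem totalDegree_pderiv_le (i : σ) (p : MvPolynomial σ R) :
    (pderiv i p).totalDegree ≤ p.totalDegree - 1 := by
  conv_lhs => rw [p.as_sum, map_sum]
  refine (totalDegree_finsetSum _ _).trans (Finset.sup_le fun s hs => ?_)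
  rw [pderiv_monomial]
  by_cases hsi : s i = 0
  · simp [hsi]
  have hdeg : (s - Finsupp.single i 1).degree + 1 = s.degree := by
    conv_rhs => rw [← tsub_add_cancel_of_le
      (Finsupp.single_le_iff.mpr (Nat.one_le_iff_ne_zero.mpr hsi))]
    rw [map_add, Finsupp.degree_single]
  have hs : s.degree ≤ p.totalDegree := le_totalDegree hs
  have hmono := totalDegree_monomial_le (s - Finsupp.single i 1) (p.coeff s * s i)
  change _ ≤ Finsupp.degree _ at hmono
  omega

theorem totalDegree_mul_pderiv_le (i : σ) (p q : MvPolynomial σ R) :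
    (q * pderiv i p).totalDegree ≤ q.totalDegree + p.totalDegree - 1 := by
  rcases Nat.eq_zero_or_pos p.totalDegree with hp | hp
  · rw [totalDegree_eq_zero_iff_eq_C.mp hp, pderiv_C, mul_zero, totalDegree_zero]
    exact Nat.zero_le _
  · have hpderiv := totalDegree_pderiv_le i p
    have hmul := totalDegree_mul q (pderiv i p)
    omega

end MvPolynomial

theorem exists_tangent_vector_field_coefficients_general (n d : ℕ)
    (g : MvPolynomial (Fin n) ℂ) (hg : g.totalDegree ≤ d)
    (vfield : Fin n → MvPolynomial (Fin n) ℂ)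
    (hvfield : ∀ j, (vfield j).totalDegree ≤ 1) :
    ∃ v : MvPolynomial (Fin n) ℂ, v.totalDegree ≤ d ∧
      v + ∑ j : Fin n, vfield j * pderiv j g = 0 := by
  refine ⟨-∑ j : Fin n, vfield j * pderiv j g, ?_, neg_add_cancel _⟩
  rw [totalDegree_neg]
  refine (totalDegree_finsetSum _ _).trans (Finset.sup_le fun j _ => ?_)
  have hterm := totalDegree_mul_pderiv_le j g (vfield j)
  have hvj := hvfield j
  omega

/-- For every choice of coefficients `(a_α)_{|α|≤d}` (encoded as
`g = Σ a_α z^α`, `deg g ≤ d`), of affine-linear `v₁, …, v_n` and of `v_{n+1} ∈ ℂ`, there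
exist complex numbers `(v_α)_{|α|≤d}` (encoded as `v = Σ v_α z^α`, `deg v ≤ d`) such that
`Σ_α v_α z^α + Σ_{α,j} a_α v_j ∂z^α/∂z_j = 0` identically in `z`; equivalently the
logarithmic vector field `V = Σ_α v_α ∂/∂a_α + Σⱼ v_j ∂/∂z_j + v_{n+1} z_{n+1} ∂/∂z_{n+1}`
is tangent to `𝒵₀`. -/
theorem exists_tangent_vector_field_coefficients (n d : ℕ)
    (g : MvPolynomial (Fin n) ℂ) (hg : g.totalDegree ≤ d)
    (vfield : Fin n → MvPolynomial (Fin n) ℂ)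
    (hvfield : ∀ j, (vfield j).totalDegree ≤ 1)
    (vlast : ℂ) :
    ∃ v : MvPolynomial (Fin n) ℂ, v.totalDegree ≤ d ∧
      v + ∑ j : Fin n, vfield j * pderiv j g = 0 :=
  exists_tangent_vector_field_coefficients_general n d g hg vfield hvfield
end
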